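/- For all n ≥ 2, one has 2*∑_{p} d^2*A(n,p)^2 ≤ d^2*(∑_p A(n,p))^2 for every positive integer d; equivalently, 2*∑_p A(n,p)^2 ≤ (n!)^2. -/

import Mathlib

/-!
Write `a p = A(n,p)` and `S = ∑ a p = n!`. Complementing values (`σ ↦ rev ∘ σ`) swaps ascents
and descents, so `a p = a (n-1-p)`, hence `S² - 2 ∑ (a p)² = ∑ₚ a p * (S - a p - a (n-1-p))`,
and for `p ≠ n-1-p` the factor `S - a p - a (n-1-p)` is a sum of other terms `a q ≥ 0`.
That settles even `n`. For `n = 2m+1` only the middle term `a m * (S - 2 a m)` can be negative,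
but every other factor is at least `a m`, so the total is at least `a m * (2S - 3 a m)` and it
suffices that `3 a m ≤ 2 n!`. That comes from rotating positions cyclically: the ascents of the
`n` rotations of `σ` are the cyclic ascents of `σ` with one position removed, so at most `m + 1`
rotations have exactly `m` ascents, and double counting gives `n * a m ≤ (m + 1) * n!`.
-/

/-- The Eulerian number `A(n,q)`: the number of permutations of `{1,...,n}`
with exactly `q` ascents.  (In particular `A(n,q) = 0` unless `0 ≤ q < n`.) -/
def eulerian (n q : ℕ) : ℕ :=
  (Finset.univ.filter fun σ : Equiv.Perm (Fin n) =>
    (Finset.univ.filter fun i : Fin n =>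
      ∃ j : Fin n, (j : ℕ) = (i : ℕ) + 1 ∧ σ i < σ j).card = q).card

open Finset

theorem card_filter_card_erase_eq_le {α : Type*} [Fintype α] [DecidableEq α] (C : Finset α)
    (m : ℕ) : #{u | #(C.erase u) = m} ≤ max (Fintype.card α - m) (m + 1) := by
  by_cases hC : #C = m
  · calc #{u | #(C.erase u) = m} ≤ #Cᶜ := card_le_card fun u hu => by
          simp only [mem_filter, mem_univ, true_and] at hu
          rw [mem_compl]
          intro huC
          rw [card_erase_of_mem huC] at hu
          have := card_pos.2 ⟨u, huC⟩
          omega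
      _ = Fintype.card α - m := by rw [card_compl, hC]
      _ ≤ _ := le_max_left _ _
  by_cases hC' : #C = m + 1
  · calc #{u | #(C.erase u) = m} ≤ #C := card_le_card fun u hu => by
          simp only [mem_filter, mem_univ, true_and] at hu
          by_contra huC
          rw [erase_eq_of_notMem huC] at hu
          exact hC hu
      _ ≤ _ := hC' ▸ le_max_right _ _
  · rw [filter_false_of_mem fun u _ => ?_, card_empty]
    · exact Nat.zero_le _
    rw [card_erase_eq_ite]
    split_ifs <;> omega

theorem two_mul_sum_sq_le_sq_sum_of_palindrome {R : Type*} [CommRing R] [LinearOrder R]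
    [IsStrictOrderedRing R] {n : ℕ} {a : ℕ → R} (ha : ∀ p < n, 0 ≤ a p)
    (hpal : ∀ p < n, a (n - 1 - p) = a p)
    (hmid : ∀ m, n = 2 * m + 1 → 3 * a m ≤ 2 * ∑ p ∈ range n, a p) :
    2 * ∑ p ∈ range n, a p ^ 2 ≤ (∑ p ∈ range n, a p) ^ 2 := by
  set S := ∑ p ∈ range n, a p with hS
  have hrest : ∀ p < n, n - 1 - p ≠ p →
      S - a p - a (n - 1 - p) = ∑ q ∈ ((range n).erase p).erase (n - 1 - p), a q := by
    intro p hp hp'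
    rw [hS, ← add_sum_erase _ _ (mem_range.2 hp),
      ← add_sum_erase _ _ (mem_erase.2 ⟨hp', mem_range.2 (by omega)⟩)]
    ring
  have hgap : S ^ 2 - 2 * ∑ p ∈ range n, a p ^ 2
      = ∑ p ∈ range n, a p * (S - a p - a (n - 1 - p)) := by
    have hsq : ∑ p ∈ range n, a p ^ 2 = ∑ p ∈ range n, a p * a (n - 1 - p) :=
      sum_congr rfl fun p hp => by rw [hpal p (mem_range.1 hp), sq]
    rw [sq S, sum_mul, two_mul]
    nth_rewrite 2 [hsq]
    rw [← sum_add_distrib, ← sum_sub_distrib]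
    exact sum_congr rfl fun p _ => by ring
  rw [← sub_nonneg, hgap]
  rcases Nat.even_or_odd' n with ⟨m, rfl | rfl⟩
  · refine sum_nonneg fun p hp => mul_nonneg (ha p (mem_range.1 hp)) ?_
    have hp := mem_range.1 hp
    rw [hrest p hp (by omega)]
    exact sum_nonneg fun q hq => ha q (by simp at hq; omega)
  · have hm : m ∈ range (2 * m + 1) := mem_range.2 (by omega)
    have hside : ∀ p ∈ (range (2 * m + 1)).erase m,
        a m ≤ S - a p - a (2 * m + 1 - 1 - p) := by
      intro p hp
      obtain ⟨hpm, hp⟩ := mem_erase.1 hp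
      have hp := mem_range.1 hp
      rw [hrest p hp (by omega)]
      exact single_le_sum (fun q hq => ha q (by simp at hq; omega)) (by simp; omega)
    have hmm : 2 * m + 1 - 1 - m = m := by omega
    calc (0 : R) ≤ a m * (2 * S - 3 * a m) :=
          mul_nonneg (ha m (by omega)) (sub_nonneg.2 (hmid m rfl))
      _ = a m * (S - a m - a m) + ∑ p ∈ (range (2 * m + 1)).erase m, a p * a m := by
          rw [← sum_mul, sum_erase_eq_sub hm]; ring
      _ ≤ a m * (S - a m - a m)
            + ∑ p ∈ (range (2 * m + 1)).erase m, a p * (S - a p - a (2 * m + 1 - 1 - p)) := by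
          gcongr with p hp
          · exact ha p (by simp at hp; omega)
          · exact hside p hp
      _ = _ := by
          convert add_sum_erase _ (fun p => a p * (S - a p - a (2 * m + 1 - 1 - p))) hm using 4
          rw [hmm]

namespace Equiv.Perm

variable {k : ℕ}

def cyclicAscents (σ : Perm (Fin (k + 1))) : Finset (Fin (k + 1)) :=
  {i | σ i < σ (i + 1)}

def ascents (σ : Perm (Fin (k + 1))) : Finset (Fin (k + 1)) :=
  (cyclicAscents σ).erase (Fin.last k)

theorem mem_ascents {σ : Perm (Fin (k + 1))} {i : Fin (k + 1)} :
    i ∈ ascents σ ↔ i ≠ Fin.last k ∧ σ i < σ (i + 1) := by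
  simp [ascents, cyclicAscents]

theorem card_ascents_lt (σ : Perm (Fin (k + 1))) : #(ascents σ) < k + 1 := by
  simpa using card_lt_univ_of_notMem (s := ascents σ) (notMem_erase _ _)

theorem card_ascents_add_card_ascents_revPerm_mul (σ : Perm (Fin (k + 1))) :
    #(ascents σ) + #(ascents (Fin.revPerm * σ)) = k := by
  have hasc : ascents σ = {i ∈ univ.erase (Fin.last k) | σ i < σ (i + 1)} := by
    ext i; simp [mem_ascents]
  have hdesc :
      ascents (Fin.revPerm * σ) = {i ∈ univ.erase (Fin.last k) | ¬σ i < σ (i + 1)} := by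
    ext i
    simp only [mem_ascents, mul_apply, Fin.revPerm_apply, Fin.rev_lt_rev, mem_filter,
      mem_erase, mem_univ, and_true, not_lt, and_congr_right_iff]
    intro hi
    have hne : σ (i + 1) ≠ σ i := σ.injective.ne fun h => by
      have := congrArg Fin.val h
      rw [Fin.val_add_one_of_lt (Fin.lt_last_iff_ne_last.2 hi)] at this
      omega
    exact hne.le_iff_lt.symm
  rw [hasc, hdesc, card_filter_add_card_filter_not, card_erase_of_mem (mem_univ _), card_univ,
    Fintype.card_fin, Nat.add_sub_cancel]

theorem cyclicAscents_mul_addRight (σ : Perm (Fin (k + 1))) (t : Fin (k + 1)) :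
    cyclicAscents (σ * Equiv.addRight t) =
      (cyclicAscents σ).map (Equiv.subRight t).toEmbedding := by
  ext i
  simp [cyclicAscents, mem_map_equiv, add_right_comm]

theorem card_ascents_mul_addRight (σ : Perm (Fin (k + 1))) (t : Fin (k + 1)) :
    #(ascents (σ * Equiv.addRight t)) = #((cyclicAscents σ).erase (Fin.last k + t)) := by
  conv_rhs => rw [← card_map (Equiv.subRight t).toEmbedding, map_erase]
  simp [ascents, cyclicAscents_mul_addRight]

end Equiv.Perm

open Equiv.Perm Nat

theorem eulerian_eq_card_ascents (k q : ℕ) :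
    eulerian (k + 1) q = #{σ : Equiv.Perm (Fin (k + 1)) | #(ascents σ) = q} := by
  unfold eulerian
  congr! with σ
  ext i
  rw [mem_ascents, mem_filter]
  constructor
  · rintro ⟨-, j, hj, hlt⟩
    have hi : i ≠ Fin.last k := fun h => by
      rw [h, Fin.val_last] at hj
      omega
    have hj' : j = i + 1 :=
      Fin.ext (by rw [Fin.val_add_one_of_lt (Fin.lt_last_iff_ne_last.2 hi), hj])
    exact ⟨hi, hj' ▸ hlt⟩
  · rintro ⟨hi, hlt⟩
    exact ⟨mem_univ _, i + 1, Fin.val_add_one_of_lt (Fin.lt_last_iff_ne_last.2 hi), hlt⟩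

theorem sum_range_eulerian (k : ℕ) : ∑ p ∈ range (k + 1), eulerian (k + 1) p = (k + 1)! := by
  simp only [eulerian_eq_card_ascents]
  rw [← card_eq_sum_card_fiberwise fun σ _ => mem_range.2 (card_ascents_lt σ), Finset.card_univ,
    Fintype.card_perm, Fintype.card_fin]

theorem eulerian_symm {k p : ℕ} (hp : p ≤ k) :
    eulerian (k + 1) (k - p) = eulerian (k + 1) p := by
  rw [eulerian_eq_card_ascents, eulerian_eq_card_ascents]
  refine card_equiv (Equiv.mulLeft Fin.revPerm) fun σ => ?_
  have := card_ascents_add_card_ascents_revPerm_mul σ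
  simp only [mem_filter, mem_univ, true_and, Equiv.coe_mulLeft]
  omega

theorem succ_mul_eulerian_le (k m : ℕ) :
    (k + 1) * eulerian (k + 1) m ≤ max (k + 1 - m) (m + 1) * (k + 1)! := by
  calc (k + 1) * eulerian (k + 1) m
      = ∑ t : Fin (k + 1), #{σ : Equiv.Perm _ | #(ascents (σ * Equiv.addRight t)) = m} := by
        have hrot : ∀ t : Fin (k + 1),
            #{σ : Equiv.Perm _ | #(ascents (σ * Equiv.addRight t)) = m} =
              #{σ : Equiv.Perm _ | #(ascents σ) = m} := fun t =>
          card_equiv (Equiv.mulRight (Equiv.addRight t)) (by simp)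
        simp [hrot, eulerian_eq_card_ascents]
    _ = ∑ σ : Equiv.Perm _, #{t : Fin (k + 1) | #(ascents (σ * Equiv.addRight t)) = m} := by
        simp only [card_filter]
        exact sum_comm
    _ ≤ ∑ _σ : Equiv.Perm (Fin (k + 1)), max (k + 1 - m) (m + 1) := sum_le_sum fun σ _ => by
        simp only [card_ascents_mul_addRight]
        rw [card_equiv (Equiv.addLeft (Fin.last k)) (t := {u | #((cyclicAscents σ).erase u) = m})
          (by simp)]
        simpa using card_filter_card_erase_eq_le (cyclicAscents σ) m
    _ = _ := by simp [Finset.card_univ, Fintype.card_perm, mul_comm]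

theorem three_mul_eulerian_le {m : ℕ} (hm : 1 ≤ m) :
    3 * eulerian (2 * m + 1) m ≤ 2 * (2 * m + 1)! := by
  have h := succ_mul_eulerian_le (2 * m) m
  rw [show 2 * m + 1 - m = m + 1 by omega, max_self] at h
  refine Nat.le_of_mul_le_mul_left ?_ (by omega : 0 < 2 * m + 1)
  nlinarith

theorem eulerian_squared_inequality_general (n d : ℕ) (hn : 2 ≤ n) :
    2 * ∑ p ∈ Finset.range n, d ^ 2 * (eulerian n p) ^ 2 ≤
      d ^ 2 * (∑ p ∈ Finset.range n, eulerian n p) ^ 2 := by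
  obtain ⟨k, rfl⟩ : ∃ k, n = k + 1 := ⟨n - 1, by omega⟩
  have key : 2 * ∑ p ∈ range (k + 1), (eulerian (k + 1) p : ℤ) ^ 2
      ≤ (∑ p ∈ range (k + 1), (eulerian (k + 1) p : ℤ)) ^ 2 := by
    refine two_mul_sum_sq_le_sq_sum_of_palindrome (fun p _ => by positivity)
      (fun p hp => ?_) fun m hm => ?_
    · rw [Nat.add_sub_cancel, eulerian_symm (by omega)]
    · obtain rfl : k = 2 * m := by omega
      rw [← Nat.cast_sum, sum_range_eulerian]
      exact_mod_cast three_mul_eulerian_le (by omega)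
  rw [← mul_sum, mul_left_comm]
  exact Nat.mul_le_mul_left _ (by exact_mod_cast key)

/-- For all `n ≥ 2` and every positive integer `d`,
`2 ∑ₚ d² A(n,p)² ≤ d² (∑ₚ A(n,p))²`; equivalently (since `∑ₚ A(n,p) = n!`),
`2 ∑ₚ A(n,p)² ≤ (n!)²`. -/
theorem eulerian_squared_inequality (n d : ℕ) (hn : 2 ≤ n) (hd : 0 < d) :
    2 * ∑ p ∈ Finset.range n, d ^ 2 * (eulerian n p) ^ 2 ≤
      d ^ 2 * (∑ p ∈ Finset.range n, eulerian n p) ^ 2 :=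
  eulerian_squared_inequality_general n d hn
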